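/- The variance v_n of the number of cycles of a uniformly random permutation of {1,...,n} satisfies v_1 = 0 and v_n = 1 + (1/n) Σ_{i=1}^{n-1} v_i − H_n/n for n ≥ 2, where H_n is the n-th harmonic number. -/

import Mathlib

/-!
Write `decomposeFin.symm (p, e) = swap 0 p * e'`, where `e'` extends `e : Perm (Fin n)` by the
fixed point `0`. For `p = 0` this adds a one-element cycle; for `p ≠ 0` it inserts `0` into the
cycle of `p`, so the number of cycles is unchanged. Hence `N_{n+1} = N_n + B` with `B` an
independent Bernoulli variable of parameter `1/(n+1)`, so `E N_{n+1} = E N_n + 1/(n+1)` and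
`v_{n+1} = v_n + 1/(n+1) - 1/(n+1)^2`. The recursion then follows by telescoping: the difference
`n v_n - ∑_{i<n} v_i` grows by `1 - 1/(n+1)` at each step, as does `n - H_n`.
-/

open scoped Classical

/-- The number of cycles of a permutation of `Fin n`, counting fixed points
as cycles of length one. -/
noncomputable def numCycles {n : ℕ} (π : Equiv.Perm (Fin n)) : ℕ :=
  π.cycleType.card + (n - π.support.card)

/-- `μ_{n,s}`: the `s`-th moment of the number of cycles of a uniformly random
permutation of `Fin n`. -/
noncomputable def cycMoment (n s : ℕ) : ℝ :=
  (∑ π : Equiv.Perm (Fin n), ((numCycles π : ℝ)) ^ s) / (n.factorial : ℝ)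

/-- `v_n`: the variance of the number of cycles of a uniformly random
permutation of `Fin n`. -/
noncomputable def cycVar (n : ℕ) : ℝ := cycMoment n 2 - (cycMoment n 1) ^ 2

open Finset

namespace Equiv.Perm

variable {α : Type*} [Fintype α] [DecidableEq α]

theorem card_parts_partition (σ : Perm α) :
    σ.partition.parts.card = σ.cycleType.card + (Fintype.card α - #σ.support) := by
  simp [parts_partition]

theorem card_cycleType_swap_mul {f : Perm α} {x : α} (hx : f x ≠ x) (hffx : f (f x) ≠ x) :
    (swap x (f x) * f).cycleType.card = f.cycleType.card := by
  -- `swap x (f x) * f` removes `x` from its cycle `c` and leaves the other cycles, those of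
  -- `f * c⁻¹`, untouched.
  set c := f.cycleOf x
  have hc : c ∈ f.cycleFactorsFinset := cycleOf_mem_cycleFactorsFinset_iff.2 (mem_support.2 hx)
  have hcx : c x = f x := cycleOf_apply_self f x
  have hccx : c (c x) = f (f x) := by rw [hcx, cycleOf_apply_apply_self]
  have hcycle : IsCycle (swap x (c x) * c) :=
    (isCycle_cycleOf f hx).swap_mul (hcx ▸ hx) (hccx ▸ hcx ▸ hffx)
  have hdisj : Disjoint (f * c⁻¹) c := disjoint_mul_inv_of_mem_cycleFactorsFinset hc
  have hdisj' : Disjoint (swap x (c x) * c) (f * c⁻¹) := by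
    refine hdisj.symm.mono ?_ le_rfl
    rw [support_swap_mul_eq c x (hccx ▸ hcx ▸ hffx)]
    exact sdiff_subset
  have hsplit : swap x (f x) * f = swap x (c x) * c * (f * c⁻¹) := by
    rw [hcx, mul_assoc, ← hdisj.commute.eq, inv_mul_cancel_right]
  rw [hsplit, hdisj'.cycleType_mul, ← inv_mul_cancel_right f c, hdisj.cycleType_mul,
    inv_mul_cancel_right, Multiset.card_add, Multiset.card_add,
    card_cycleType_eq_one.2 hcycle, card_cycleType_eq_one.2 (isCycle_cycleOf f hx), add_comm]

theorem card_parts_partition_swap_mul {σ : Perm α} {a b : α} (hab : a ≠ b) (ha : σ a = a) :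
    (swap a b * σ).partition.parts.card + 1 = σ.partition.parts.card := by
  have hcard := (swap a b * σ).support.card_le_univ
  simp only [card_parts_partition]
  by_cases hb : σ b = b
  · have hdisj : Disjoint (swap a b) σ := by
      rw [disjoint_iff_disjoint_support, support_swap hab]
      simp [ha, hb]
    rw [hdisj.support_mul, card_union_of_disjoint hdisj.disjoint_support,
      card_support_swap hab] at *
    rw [hdisj.cycleType_mul, Multiset.card_add, card_cycleType_eq_one.2 (isCycle_swap hab)]
    omega
  · -- `σ` is obtained from `τ` by removing `a` from its cycle, which has length at least three.
    set τ := swap a b * σ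
    have hτa : τ a = b := by simp [τ, ha]
    have hσ : σ = swap a (τ a) * τ := by rw [hτa, swap_mul_self_mul]
    have hττa : τ (τ a) ≠ a := by
      have hσb : σ b ≠ a := fun h => hab (σ.injective (h.trans ha.symm)).symm
      rw [hτa, mul_apply, swap_apply_of_ne_of_ne hσb hb]
      exact hσb
    have hτa_ne : τ a ≠ a := hτa ▸ hab.symm
    have hsupp : σ.support = τ.support \ {a} := by rw [hσ, support_swap_mul_eq τ a hττa]
    have haτ : a ∈ τ.support := mem_support.2 hτa_ne
    rw [hσ, card_cycleType_swap_mul hτa_ne hττa, ← hσ, hsupp,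
      card_sdiff_of_subset (singleton_subset_iff.2 haτ)]
    have := card_pos.2 ⟨a, haτ⟩
    simp only [card_singleton]
    omega

end Equiv.Perm

open Equiv Equiv.Perm

theorem decomposeFin_symm_zero {n : ℕ} (e : Perm (Fin n)) :
    decomposeFin.symm (0, e) = e.extendDomain (finSuccAboveEquiv 0) := by
  ext x
  refine Fin.cases ?_ (fun i => ?_) x
  · rw [decomposeFin_symm_apply_zero, extendDomain_apply_not_subtype _ _ (by simp)]
  · rw [decomposeFin_symm_apply_succ]
    have : (i.succ : Fin (n + 1)) = finSuccAboveEquiv 0 i := rfl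
    rw [this, extendDomain_apply_image]
    simp [finSuccAboveEquiv_apply]

theorem decomposeFin_symm_eq_swap_mul {n : ℕ} (p : Fin (n + 1)) (e : Perm (Fin n)) :
    decomposeFin.symm (p, e) = swap 0 p * decomposeFin.symm (0, e) := by
  ext x
  refine Fin.cases ?_ (fun i => ?_) x <;> simp

theorem numCycles_eq_card_parts {n : ℕ} (π : Perm (Fin n)) :
    numCycles π = π.partition.parts.card := by
  simp [numCycles, card_parts_partition]

theorem numCycles_decomposeFin_symm_zero {n : ℕ} (e : Perm (Fin n)) :
    numCycles (decomposeFin.symm (0, e)) = numCycles e + 1 := by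
  have := e.support.card_le_univ
  simp only [numCycles, decomposeFin_symm_zero, cycleType_extendDomain,
    card_support_extend_domain, Fintype.card_fin] at *
  omega

theorem numCycles_decomposeFin_symm {n : ℕ} (p : Fin (n + 1)) (e : Perm (Fin n)) :
    numCycles (decomposeFin.symm (p, e)) = numCycles e + if p = 0 then 1 else 0 := by
  split_ifs with hp
  · rw [hp, numCycles_decomposeFin_symm_zero]
  · have := card_parts_partition_swap_mul (Ne.symm hp) (decomposeFin_symm_apply_zero 0 e)
    rw [← decomposeFin_symm_eq_swap_mul, ← numCycles_eq_card_parts, ← numCycles_eq_card_parts,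
      numCycles_decomposeFin_symm_zero] at this
    omega

theorem sum_perm_fin_succ_numCycles {M : Type*} [AddCommMonoid M] (n : ℕ) (g : ℕ → M) :
    ∑ π : Perm (Fin (n + 1)), g (numCycles π) =
      ∑ e : Perm (Fin n), g (numCycles e + 1) + n • ∑ e : Perm (Fin n), g (numCycles e) := by
  rw [← decomposeFin.symm.sum_comp, Fintype.sum_prod_type, Fin.sum_univ_succ]
  simp only [numCycles_decomposeFin_symm, Fin.succ_ne_zero, if_true, if_false, add_zero,
    sum_const, card_univ, Fintype.card_fin]

theorem cycMoment_one_succ (n : ℕ) : cycMoment (n + 1) 1 = cycMoment n 1 + 1 / (n + 1) := by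
  simp only [cycMoment, pow_one, sum_perm_fin_succ_numCycles n (fun k => (k : ℝ))]
  push_cast
  rw [sum_add_distrib, sum_const, card_univ, Fintype.card_perm,
    Fintype.card_fin, Nat.factorial_succ]
  push_cast
  field_simp
  ring

theorem cycMoment_two_succ (n : ℕ) :
    cycMoment (n + 1) 2 = cycMoment n 2 + (2 * cycMoment n 1 + 1) / (n + 1) := by
  simp only [cycMoment, sum_perm_fin_succ_numCycles n (fun k => (k : ℝ) ^ 2)]
  push_cast
  simp only [add_sq, sum_add_distrib, ← sum_mul, ← mul_sum, sum_const,
    card_univ, Fintype.card_perm, Fintype.card_fin, Nat.factorial_succ, pow_one]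
  push_cast
  field_simp
  ring

theorem cycVar_succ (n : ℕ) :
    cycVar (n + 1) = cycVar n + 1 / (n + 1) - 1 / (n + 1) ^ 2 := by
  simp only [cycVar, cycMoment_one_succ, cycMoment_two_succ]
  field_simp
  ring

theorem cycVar_zero : cycVar 0 = 0 := by
  simp [cycVar, cycMoment, numCycles]

theorem cycVar_one : cycVar 1 = 0 := by
  rw [cycVar_succ, cycVar_zero]
  norm_num

theorem succ_mul_cycVar_succ_sub_sum (m : ℕ) :
    (m + 1 : ℝ) * cycVar (m + 1) - ∑ i ∈ Icc 1 m, cycVar i =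
      (m + 1 : ℝ) - ∑ j ∈ Icc 1 (m + 1), (1 : ℝ) / j := by
  induction m with
  | zero => simp [cycVar_one]
  | succ m ih =>
    rw [sum_Icc_succ_top (by omega), sum_Icc_succ_top (by omega), cycVar_succ (m + 1)]
    push_cast at ih ⊢
    field_simp
    linear_combination ((m : ℝ) + 2) * ih

/-- The variance of the number of cycles satisfies `v_1 = 0` and
`v_n = 1 + (1/n) ∑_{i=1}^{n-1} v_i − H_n/n` for `n ≥ 2`. -/
theorem cycVar_recursion :
    cycVar 1 = 0 ∧
    ∀ n : ℕ, 2 ≤ n →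
      cycVar n = 1 + (1 / n : ℝ) * ∑ i ∈ Finset.Icc 1 (n - 1), cycVar i
        - (∑ j ∈ Finset.Icc 1 n, (1 : ℝ) / j) / n := by
  refine ⟨cycVar_one, fun n hn => ?_⟩
  obtain ⟨m, rfl⟩ : ∃ m, n = m + 1 := ⟨n - 1, by omega⟩
  have := succ_mul_cycVar_succ_sub_sum m
  rw [Nat.add_sub_cancel]
  push_cast
  field_simp
  linarith
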